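/- arXiv:2302.14598 — 4 statements merged into one kernel-verified Lean document; each statement's English description precedes it below -/
import Mathlib

section
/- For every real orthogonal $d \times d$ matrix $Z$ there exists a signature matrix $D$ (a diagonal matrix whose diagonal entries are $\pm 1$) such that $ZD$ does not have $-1$ as an eigenvalue (i.e., $I_d + ZD$ is invertible) and the Cayley transform $A = (I_d - ZD)(I_d + ZD)^{-1}$ satisfies $|A_{ij}| \le 1$ for all $1 \le i, j \le d$. -/
/-!
Choose a sign matrix `D` maximizing `|det (1 + Z * D)|`. As `det (1 + Z * D)` is affine in each
sign, its sum over all `2 ^ d` sign matrices is `det (2 • 1) = 2 ^ d`, so the maximum is nonzero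
and the Cayley transform `A` of the orthogonal matrix `W = Z * D` is defined; it is
skew-symmetric. Flipping the signs of two columns `i ≠ j` of `W` is a rank-two update, and by
Sylvester's determinant identity it multiplies `det (1 + W)` by the principal minor
`A i i * A j j - A i j * A j i = A i j ^ 2`. Maximality of `D` then forces `A i j ^ 2 ≤ 1`.
-/

open Matrix

namespace Matrix

variable {n m R : Type*} [Fintype n] [DecidableEq n]

section CommRing

variable [CommRing R]

noncomputable def cayley (W : Matrix n n R) : Matrix n n R := (1 - W) * (1 + W)⁻¹

theorem cayley_eq_two_smul_inv_sub_one {W : Matrix n n R} (hW : IsUnit (1 + W).det) :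
    cayley W = (2 : R) • (1 + W)⁻¹ - 1 := by
  have h : 1 - W = (2 : R) • 1 - (1 + W) := by
    rw [two_smul]; abel
  rw [cayley, h, sub_mul, smul_mul_assoc, Matrix.one_mul, mul_nonsing_inv _ hW]

theorem cayley_transpose {W : Matrix n n R} (horth : Wᵀ * W = 1) (hW : IsUnit (1 + W).det) :
    (cayley W)ᵀ = -cayley W := by
  have hinv : (1 + Wᵀ)⁻¹ = (1 + W)⁻¹ * W := by
    rw [show 1 + Wᵀ = Wᵀ * (1 + W) by rw [Matrix.mul_add, horth, Matrix.mul_one, add_comm],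
      Matrix.mul_inv_rev, inv_eq_right_inv horth]
  have hsum : (1 + W)⁻¹ * W + (1 + W)⁻¹ = 1 := by
    rw [← mul_add_one, add_comm W 1, nonsing_inv_mul _ hW]
  rw [cayley_eq_two_smul_inv_sub_one hW, transpose_sub, transpose_smul, transpose_nonsing_inv,
    transpose_add, transpose_one, hinv, eq_sub_of_add_eq hsum]
  module

omit [Fintype n] in
theorem diagonal_neg_one_on_range_eq [Fintype m] [DecidableEq m] {q : m → n}
    (hq : Function.Injective q) :
    diagonal (fun l => if l ∈ Set.range q then (-1 : R) else 1) =
      1 - (2 : R) •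
        (((1 : Matrix n n R).submatrix q id)ᵀ * (1 : Matrix n n R).submatrix q id) := by
  ext a b
  rcases eq_or_ne a b with rfl | hab
  · by_cases h : a ∈ Set.range q
    · obtain ⟨y, rfl⟩ := h
      norm_num [mul_apply, one_apply, hq.eq_iff]
    · simp_all [mul_apply, one_apply]
  · rw [diagonal_apply_ne _ hab, sub_apply, one_apply_ne hab, smul_apply, mul_apply,
      Finset.sum_eq_zero fun x _ => ?_, smul_zero, sub_zero]
    rw [transpose_apply, submatrix_apply, submatrix_apply, one_apply, one_apply]
    grind

theorem det_one_add_mul_diagonal_neg_one_on_range [Fintype m] [DecidableEq m] {W : Matrix n n R}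
    (hW : IsUnit (1 + W).det) {q : m → n} (hq : Function.Injective q) :
    det (1 + W * diagonal fun l => if l ∈ Set.range q then -1 else 1) =
      det (1 + W) * det ((cayley W).submatrix q q) := by
  set V : Matrix m n R := (1 : Matrix n n R).submatrix q id
  have hVV : V * Vᵀ = 1 := by
    ext a b; simp [V, mul_apply, one_apply, hq.eq_iff]
  have hVA : V * cayley W * Vᵀ = (cayley W).submatrix q q := by
    ext a b; simp [V, mul_apply, one_apply]
  have hW2 : (1 + W) * (1 - cayley W) = (2 : R) • W := by
    rw [cayley_eq_two_smul_inv_sub_one hW, sub_sub_eq_add_sub, Matrix.mul_sub, Matrix.mul_add,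
      Matrix.mul_smul, mul_nonsing_inv _ hW, Matrix.mul_one]
    module
  have hfactor : 1 + W * diagonal (fun l => if l ∈ Set.range q then -1 else 1) =
      (1 + W) * (1 + (-((1 - cayley W) * Vᵀ)) * V) :=
    calc 1 + W * diagonal (fun l => if l ∈ Set.range q then -1 else 1)
        = 1 + W - (2 : R) • W * (Vᵀ * V) := by
          rw [diagonal_neg_one_on_range_eq hq, Matrix.mul_sub, Matrix.mul_one, Matrix.mul_smul,
            add_sub_assoc, smul_mul_assoc]
      _ = 1 + W - (1 + W) * (1 - cayley W) * (Vᵀ * V) := by rw [hW2]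
      _ = (1 + W) * (1 + (-((1 - cayley W) * Vᵀ)) * V) := by
          rw [Matrix.neg_mul, Matrix.mul_add, Matrix.mul_one, Matrix.mul_neg, sub_eq_add_neg,
            Matrix.mul_assoc (1 - cayley W), Matrix.mul_assoc (1 + W)]
  rw [hfactor, det_mul, det_one_add_mul_comm, Matrix.mul_neg, Matrix.sub_mul, Matrix.one_mul,
    Matrix.mul_sub, hVV, ← Matrix.mul_assoc, hVA]
  congr 2
  abel

theorem sum_det_one_add_mul_diagonal_signs [DecidableEq R] (h : (1 : R) ≠ -1)
    (Z : Matrix n n R) :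
    ∑ s ∈ Fintype.piFinset fun _ => ({1, -1} : Finset R), det (1 + Z * diagonal s) =
      2 ^ Fintype.card n := by
  have hrow : ∀ s : n → R,
      1 + diagonal s * Z = of fun l => (1 : Matrix n n R) l + s l • Z l := by
    intro s; ext l k; simp [diagonal_mul]
  have hpair : ∀ l, ∑ σ ∈ ({1, -1} : Finset R), ((1 : Matrix n n R) l + σ • Z l) =
      (2 : R) • (1 : Matrix n n R) l := by
    intro l; rw [Finset.sum_pair h]; module
  calc ∑ s ∈ Fintype.piFinset fun _ => ({1, -1} : Finset R), det (1 + Z * diagonal s)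
      = ∑ s ∈ Fintype.piFinset fun _ => ({1, -1} : Finset R),
          detRowAlternating fun l => (1 : Matrix n n R) l + s l • Z l := by
        refine Finset.sum_congr rfl fun s _ => ?_
        rw [det_one_add_mul_comm, hrow]; rfl
    _ = detRowAlternating fun l =>
          ∑ σ ∈ ({1, -1} : Finset R), ((1 : Matrix n n R) l + σ • Z l) :=
        ((detRowAlternating (n := n) (R := R)).toMultilinearMap.map_sum_finset
          (fun l σ => (1 : Matrix n n R) l + σ • Z l) fun _ => {1, -1}).symm
    _ = det ((2 : R) • (1 : Matrix n n R)) := by simp_rw [hpair]; rfl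
    _ = 2 ^ Fintype.card n := by rw [det_smul, det_one, mul_one]

theorem mul_diagonal_transpose_mul_self_eq_one {Z : Matrix n n R} (hZ : Zᵀ * Z = 1) {s : n → R}
    (hs : ∀ i, s i * s i = 1) : (Z * diagonal s)ᵀ * (Z * diagonal s) = 1 := by
  rw [transpose_mul, diagonal_transpose, Matrix.mul_assoc, ← Matrix.mul_assoc Zᵀ, hZ,
    Matrix.one_mul, diagonal_mul_diagonal, funext hs, diagonal_one]

end CommRing

theorem abs_cayley_apply_le_one [Field R] [LinearOrder R] [IsStrictOrderedRing R]
    {W : Matrix n n R} (horth : Wᵀ * W = 1) (hW : det (1 + W) ≠ 0)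
    (hmax : ∀ i j, i ≠ j →
      |det (1 + W * diagonal fun l => if l ∈ Set.range ![i, j] then -1 else 1)| ≤ |det (1 + W)|)
    (i j : n) : |cayley W i j| ≤ 1 := by
  have hskew : ∀ a b, cayley W b a = -cayley W a b := fun a b => by
    simpa using congrFun (congrFun (cayley_transpose horth hW.isUnit) a) b
  have hdiag : ∀ a, cayley W a a = 0 := fun a => by linarith [hskew a a]
  rcases eq_or_ne i j with rfl | hij
  · simp [hdiag]
  have hminor : det ((cayley W).submatrix ![i, j] ![i, j]) = cayley W i j ^ 2 := by
    rw [det_fin_two]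
    simp [hdiag, hskew i j, sq]
  have hle := hmax i j hij
  rw [det_one_add_mul_diagonal_neg_one_on_range hW.isUnit (injective_pair_iff_ne.2 hij), abs_mul,
    hminor] at hle
  have hsq : |cayley W i j ^ 2| ≤ 1 :=
    le_of_mul_le_mul_left (by rwa [mul_one]) (abs_pos.2 hW)
  rwa [abs_pow, pow_le_one_iff_of_nonneg (abs_nonneg _) two_ne_zero] at hsq

end Matrix

/-- For every real orthogonal matrix `Z` there is a signature matrix `D` (diagonal with
`±1` entries) such that `I + Z * D` is invertible and all entries of the Cayley transform
`(I - Z * D)(I + Z * D)⁻¹` are at most `1` in absolute value. -/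
theorem stmt_2 (d : ℕ) (Z : Matrix (Fin d) (Fin d) ℝ) (hZ : Zᵀ * Z = 1) :
    ∃ D : Matrix (Fin d) (Fin d) ℝ,
      D.IsDiag ∧ (∀ i, D i i = 1 ∨ D i i = -1) ∧
      IsUnit (1 + Z * D) ∧
      ∀ i j, |((1 - Z * D) * (1 + Z * D)⁻¹) i j| ≤ 1 := by
  set signs := Fintype.piFinset fun _ : Fin d => ({1, -1} : Finset ℝ)
  have mem_signs : ∀ s, s ∈ signs ↔ ∀ i, s i = 1 ∨ s i = -1 := by simp [signs]
  obtain ⟨s, hs, hmax⟩ := signs.exists_max_image (fun s => |det (1 + Z * diagonal s)|)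
    ⟨1, (mem_signs 1).2 fun _ => .inl rfl⟩
  have hdet : det (1 + Z * diagonal s) ≠ 0 := by
    intro h0
    have hsum := sum_det_one_add_mul_diagonal_signs (by norm_num) Z
    rw [Finset.sum_eq_zero fun t ht =>
      abs_nonpos_iff.1 ((hmax t ht).trans_eq (by rw [h0, abs_zero]))] at hsum
    exact pow_ne_zero _ two_ne_zero hsum.symm
  have hsign := (mem_signs s).1 hs
  have horth : (Z * diagonal s)ᵀ * (Z * diagonal s) = 1 :=
    mul_diagonal_transpose_mul_self_eq_one hZ fun i => by rcases hsign i with h | h <;> simp [h]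
  refine ⟨diagonal s, isDiag_diagonal s, by simpa using hsign,
    (isUnit_iff_isUnit_det _).2 hdet.isUnit, abs_cayley_apply_le_one horth hdet fun i j _ => ?_⟩
  rw [Matrix.mul_assoc, diagonal_mul_diagonal]
  refine hmax _ ((mem_signs _).2 fun l => ?_)
  split_ifs <;> rcases hsign l with h | h <;> simp [h]
end

section
/- Let $n \ge 1$ and $y$ be integers with $0 \le y < n$, and let $p \in [0,1]$. Then the binomial cumulative distribution function satisfies $\sum_{k=0}^{y} \binom{n}{k} p^k (1-p)^{n-k} = (n-y)\binom{n}{y} \int_0^{1-p} t^{n-y-1}(1-t)^{y}\, dt$. -/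
/-!
Induction on `y`. Integrating `d/dt [t^(m+1) (1-t)^(y+1)]` over `[0, 1-p]` lowers the power of
`1 - t` by one at the cost of the boundary term `p^(y+1) (1-p)^(m+1)`, which is exactly the
`(y+1)`-st summand of the binomial CDF; the base case `y = 0` is `∫₀^{1-p} t^m = (1-p)^(m+1)/(m+1)`.
-/

open intervalIntegral

theorem integral_pow_mul_one_sub_pow_succ (a b : ℕ) (x : ℝ) :
    ((a : ℝ) + 1) * ∫ t in (0 : ℝ)..x, t ^ a * (1 - t) ^ (b + 1)
      = x ^ (a + 1) * (1 - x) ^ (b + 1)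
        + ((b : ℝ) + 1) * ∫ t in (0 : ℝ)..x, t ^ (a + 1) * (1 - t) ^ b := by
  have hderiv : ∀ t : ℝ, HasDerivAt (fun t : ℝ => t ^ (a + 1) * (1 - t) ^ (b + 1))
      (((a : ℝ) + 1) * (t ^ a * (1 - t) ^ (b + 1))
        - ((b : ℝ) + 1) * (t ^ (a + 1) * (1 - t) ^ b)) t := by
    intro t
    refine ((hasDerivAt_pow (a + 1) t).fun_mul
      (((hasDerivAt_id' t).const_sub 1).fun_pow (b + 1))).congr_deriv ?_
    simp only [Nat.cast_add, Nat.cast_one, add_tsub_cancel_right]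
    ring
  have hint₁ : IntervalIntegrable (fun t : ℝ => t ^ a * (1 - t) ^ (b + 1)) MeasureTheory.volume 0 x :=
    (by fun_prop : Continuous fun t : ℝ => t ^ a * (1 - t) ^ (b + 1)).intervalIntegrable 0 x
  have hint₂ : IntervalIntegrable (fun t : ℝ => t ^ (a + 1) * (1 - t) ^ b) MeasureTheory.volume 0 x :=
    (by fun_prop : Continuous fun t : ℝ => t ^ (a + 1) * (1 - t) ^ b).intervalIntegrable 0 x
  have hftc := integral_eq_sub_of_hasDerivAt (fun t _ => hderiv t)
    ((hint₁.const_mul _).sub (hint₂.const_mul _))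
  rw [integral_sub (hint₁.const_mul _) (hint₂.const_mul _), integral_const_mul,
    integral_const_mul] at hftc
  simp only [ne_eq, add_eq_zero, one_ne_zero, and_false, not_false_eq_true, zero_pow, sub_zero,
    one_pow, mul_one] at hftc
  linarith

theorem sum_range_choose_mul_pow_mul_one_sub_pow_eq_integral (y m : ℕ) (p : ℝ) :
    ∑ k ∈ Finset.range (y + 1), ((y + 1 + m).choose k : ℝ) * p ^ k * (1 - p) ^ (y + 1 + m - k)
      = ((m : ℝ) + 1) * ((y + 1 + m).choose y : ℝ)
          * ∫ t in (0 : ℝ)..(1 - p), t ^ m * (1 - t) ^ y := by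
  induction y generalizing m with
  | zero =>
    simp only [zero_add, Finset.range_one, Finset.sum_singleton, Nat.choose_zero_right,
      Nat.cast_one, pow_zero, mul_one, tsub_zero, one_mul, integral_pow, ne_eq,
      Nat.add_eq_zero_iff, one_ne_zero, and_false, not_false_eq_true, zero_pow,
      mul_div_cancel₀ _ (by positivity : ((m : ℝ) + 1) ≠ 0)]
    ring
  | succ y ih =>
    have hn : y + 1 + 1 + m = y + 1 + (m + 1) := by ring
    have hexp : y + 1 + (m + 1) - (y + 1) = m + 1 := by omega
    have hchoose : ((y + 1 + (m + 1)).choose (y + 1) : ℝ) * ((y : ℝ) + 1)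
        = ((y + 1 + (m + 1)).choose y : ℝ) * ((m : ℝ) + 2) := by
      have h := Nat.choose_succ_right_eq (y + 1 + (m + 1)) y
      rw [show y + 1 + (m + 1) - y = m + 2 by omega] at h
      exact_mod_cast h
    have hibp := integral_pow_mul_one_sub_pow_succ m y (1 - p)
    rw [sub_sub_cancel] at hibp
    rw [Finset.sum_range_succ, hn, ih (m + 1), hexp]
    push_cast
    linear_combination (-((y + 1 + (m + 1)).choose (y + 1) : ℝ)) * hibp
      - (∫ t in (0 : ℝ)..(1 - p), t ^ (m + 1) * (1 - t) ^ y) * hchoose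

theorem stmt_11_general (n y : ℕ) (hy : y < n) (p : ℝ) :
    ∑ k ∈ Finset.range (y + 1), (n.choose k : ℝ) * p ^ k * (1 - p) ^ (n - k)
      = ((n : ℝ) - y) * (n.choose y : ℝ)
          * ∫ t in (0 : ℝ)..(1 - p), t ^ (n - y - 1) * (1 - t) ^ y := by
  obtain ⟨m, rfl⟩ : ∃ m, n = y + 1 + m := ⟨n - y - 1, by omega⟩
  rw [show y + 1 + m - y - 1 = m by omega,
    show ((y + 1 + m : ℕ) : ℝ) - y = (m : ℝ) + 1 by push_cast; ring]
  exact sum_range_choose_mul_pow_mul_one_sub_pow_eq_integral y m p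

/-- Identity relating the binomial CDF and an incomplete Beta integral:
`∑_{k=0}^{y} C(n,k) pᵏ (1-p)^{n-k} = (n-y) C(n,y) ∫₀^{1-p} t^{n-y-1} (1-t)ʸ dt`. -/
theorem stmt_11 (n y : ℕ) (hn : 1 ≤ n) (hy : y < n) (p : ℝ) (hp : p ∈ Set.Icc (0 : ℝ) 1) :
    ∑ k ∈ Finset.range (y + 1), (n.choose k : ℝ) * p ^ k * (1 - p) ^ (n - k)
      = ((n : ℝ) - y) * (n.choose y : ℝ)
          * ∫ t in (0 : ℝ)..(1 - p), t ^ (n - y - 1) * (1 - t) ^ y :=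
  stmt_11_general n y hy p
end

section
/- For every integer $n \ge 0$, every integer $y \ge 0$, and every $p \in [0,1]$, the binomial cumulative distribution function is nonincreasing in the number of trials: $\sum_{k=0}^{y} \binom{n+1}{k} p^k (1-p)^{n+1-k} \le \sum_{k=0}^{y} \binom{n}{k} p^k (1-p)^{n-k}$. -/
lemma cdf_step (n y : ℕ) (p : ℝ) :
    ∑ k ∈ Finset.range (y + 1), ((n + 1).choose k : ℝ) * p ^ k * (1 - p) ^ (n + 1 - k)
      = ∑ k ∈ Finset.range (y + 1), (n.choose k : ℝ) * p ^ k * (1 - p) ^ (n - k)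
        - p * ((n.choose y : ℝ) * p ^ y * (1 - p) ^ (n - y)) := by
  induction y with
  | zero =>
      simp [pow_succ]
      ring
  | succ y ih =>
      rw [Finset.sum_range_succ _ (y+1), Finset.sum_range_succ _ (y+1), ih]
      have pascal : (n + 1).choose (y + 1) = n.choose (y + 1) + n.choose y := by
        rw [Nat.choose_succ_succ, Nat.add_comm]
      rw [pascal]
      push_cast
      rcases le_or_gt (y + 1) n with h | h
      · have h2 : n - (y + 1) + 1 = n - y := by omega
        rw [← h2, pow_succ]
        ring
      · have h1 : n.choose (y + 1) = 0 := Nat.choose_eq_zero_of_lt h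
        rw [h1]
        push_cast
        ring

/-- The binomial CDF is nonincreasing in the number of trials. -/
theorem stmt_12 (n y : ℕ) (p : ℝ) (hp : p ∈ Set.Icc (0 : ℝ) 1) :
    ∑ k ∈ Finset.range (y + 1), ((n + 1).choose k : ℝ) * p ^ k * (1 - p) ^ (n + 1 - k)
      ≤ ∑ k ∈ Finset.range (y + 1), (n.choose k : ℝ) * p ^ k * (1 - p) ^ (n - k) := by
  rw [cdf_step]
  have h0 : (0:ℝ) ≤ p := hp.1
  have h1 : (0:ℝ) ≤ 1 - p := by linarith [hp.2]
  have : 0 ≤ p * ((n.choose y : ℝ) * p ^ y * (1 - p) ^ (n - y)) := by positivity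
  linarith
end

section
/- Fix $p \in [0,1]$, integers $m \ge 1$, data $y_1, \dots, y_m \ge 0$, and integers $n_1 \le n_2$. Let $U_1, \dots, U_m$ be independent uniform random variables on $[0,1]$ (i.e., consider the product of $m$ copies of Lebesgue measure on $[0,1]$). Then the probability of the event $\{\forall\, n \in \{n_1, n_1+1, \dots, n_2\},\ \forall\, i:\ F_{n,p}(y_i - 1) < U_i \le F_{n,p}(y_i)\}$ equals $\prod_{i=1}^m \max\big(0,\ F_{n_2,p}(y_i) - F_{n_1,p}(y_i - 1)\big)$. -/
open MeasureTheory

/-- The binomial CDF `F_{n,p}(y) = ∑_{k=0}^{y} C(n,k) pᵏ (1-p)^{n-k}` for an integer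
argument `y`, with the convention that it is `0` for `y < 0` (terms with `k > n`
vanish since `C(n,k) = 0`). -/
noncomputable def binCDF (n : ℕ) (p : ℝ) (y : ℤ) : ℝ :=
  if y < 0 then 0
  else ∑ k ∈ Finset.range (y.toNat + 1), (n.choose k : ℝ) * p ^ k * (1 - p) ^ (n - k)

section aux

noncomputable def binS (p : ℝ) (n y : ℕ) : ℝ :=
  ∑ k ∈ Finset.range (y + 1), (n.choose k : ℝ) * p ^ k * (1 - p) ^ (n - k)

variable {p : ℝ}

lemma binS_nonneg (hp0 : 0 ≤ p) (hp1 : p ≤ 1) (n y : ℕ) : 0 ≤ binS p n y := by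
  apply Finset.sum_nonneg
  intro k _
  have h1 : (0:ℝ) ≤ 1 - p := by linarith
  positivity

lemma binS_full (n : ℕ) : binS p n n = 1 := by
  have h : binS p n n = (p + (1 - p)) ^ n := by
    rw [add_pow, binS]
    exact Finset.sum_congr rfl (fun k _ => by ring)
  rw [h]
  norm_num

lemma binS_mono_y (hp0 : 0 ≤ p) (hp1 : p ≤ 1) (n : ℕ) {a b : ℕ} (h : a ≤ b) :
    binS p n a ≤ binS p n b := by
  apply Finset.sum_le_sum_of_subset_of_nonneg
  · exact Finset.range_subset_range.2 (by omega)
  · intro k _ _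
    have h1 : (0:ℝ) ≤ 1 - p := by linarith
    positivity

lemma binS_eq_of_le (n y : ℕ) (h : n ≤ y) : binS p n y = 1 := by
  have key : binS p n n = binS p n y := by
    rw [binS, binS]
    apply Finset.sum_subset (Finset.range_subset_range.2 (by omega))
    intro k _ hk
    simp only [Finset.mem_range, not_lt] at hk
    rw [Nat.choose_eq_zero_of_lt (by omega)]
    simp
  rw [← key, binS_full]

lemma binS_le_one (hp0 : 0 ≤ p) (hp1 : p ≤ 1) (n y : ℕ) : binS p n y ≤ 1 := by
  rcases le_total y n with h | h
  · calc binS p n y ≤ binS p n n := binS_mono_y hp0 hp1 n h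
      _ = 1 := binS_full n
  · rw [binS_eq_of_le n y h]

lemma binS_succ (n y : ℕ) (h : y ≤ n) :
    binS p (n + 1) y = binS p n y - (n.choose y : ℝ) * p ^ (y + 1) * (1 - p) ^ (n - y) := by
  induction y with
  | zero =>
      simp only [binS, Finset.sum_range_one, Nat.choose_zero_right, Nat.cast_one,
        Nat.sub_zero, pow_zero, pow_succ, zero_add, pow_one]
      ring
  | succ y ih =>
      have hy : y ≤ n := by omega
      have H := ih hy
      have h1 : n + 1 - (y + 1) = n - y := by omega
      have h2 : n - y = (n - (y + 1)) + 1 := by omega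
      simp only [binS] at H ⊢
      rw [Finset.sum_range_succ,
        Finset.sum_range_succ (f := fun k => (n.choose k : ℝ) * p ^ k * (1 - p) ^ (n - k)),
        H, h1, Nat.choose_succ_succ, h2]
      push_cast
      ring

lemma binS_anti_succ (hp0 : 0 ≤ p) (hp1 : p ≤ 1) (n y : ℕ) :
    binS p (n + 1) y ≤ binS p n y := by
  rcases le_or_gt y n with h | h
  · rw [binS_succ n y h]
    have h1 : (0:ℝ) ≤ 1 - p := by linarith
    have : (0:ℝ) ≤ (n.choose y : ℝ) * p ^ (y + 1) * (1 - p) ^ (n - y) := by positivity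
    linarith
  · rw [binS_eq_of_le n y (by omega)]
    exact binS_le_one hp0 hp1 _ _

lemma binS_anti (hp0 : 0 ≤ p) (hp1 : p ≤ 1) (y : ℕ) {a b : ℕ} (h : a ≤ b) :
    binS p b y ≤ binS p a y := by
  induction b, h using Nat.le_induction with
  | base => exact le_refl _
  | succ b hb ih => exact le_trans (binS_anti_succ hp0 hp1 b y) ih

lemma binCDF_eq (n : ℕ) (y : ℤ) (hy : 0 ≤ y) : binCDF n p y = binS p n y.toNat := by
  rw [binCDF, if_neg (by omega), binS]

lemma binCDF_nonneg (hp0 : 0 ≤ p) (hp1 : p ≤ 1) (n : ℕ) (y : ℤ) : 0 ≤ binCDF n p y := by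
  rcases lt_or_ge y 0 with h | h
  · rw [binCDF, if_pos h]
  · rw [binCDF_eq n y h]; exact binS_nonneg hp0 hp1 _ _

lemma binCDF_le_one (hp0 : 0 ≤ p) (hp1 : p ≤ 1) (n : ℕ) (y : ℤ) : binCDF n p y ≤ 1 := by
  rcases lt_or_ge y 0 with h | h
  · rw [binCDF, if_pos h]; norm_num
  · rw [binCDF_eq n y h]; exact binS_le_one hp0 hp1 _ _

lemma binCDF_anti (hp0 : 0 ≤ p) (hp1 : p ≤ 1) (y : ℤ) {a b : ℕ} (h : a ≤ b) :
    binCDF b p y ≤ binCDF a p y := by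
  rcases lt_or_ge y 0 with hy | hy
  · simp [binCDF, if_pos hy]
  · rw [binCDF_eq a y hy, binCDF_eq b y hy]; exact binS_anti hp0 hp1 _ h

end aux

/-- For independent uniforms `U₁, …, Uₘ` on `[0,1]`, the probability that
`F_{n,p}(yᵢ - 1) < Uᵢ ≤ F_{n,p}(yᵢ)` holds for all `i` and all `n₁ ≤ n ≤ n₂` equals
`∏ᵢ max(0, F_{n₂,p}(yᵢ) - F_{n₁,p}(yᵢ - 1))`. -/

theorem stmt_14 (p : ℝ) (hp : p ∈ Set.Icc (0 : ℝ) 1) (m : ℕ) (hm : 1 ≤ m)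
    (y : Fin m → ℕ) (n₁ n₂ : ℕ) (hn : n₁ ≤ n₂) :
    Measure.pi (fun _ : Fin m => volume.restrict (Set.Icc (0 : ℝ) 1))
        {U : Fin m → ℝ | ∀ n ∈ Finset.Icc n₁ n₂, ∀ i,
          binCDF n p ((y i : ℤ) - 1) < U i ∧ U i ≤ binCDF n p (y i)}
      = ENNReal.ofReal
          (∏ i, max 0 (binCDF n₂ p (y i) - binCDF n₁ p ((y i : ℤ) - 1))) := by
  obtain ⟨hp0, hp1⟩ := hp
  set a : Fin m → ℝ := fun i => binCDF n₁ p ((y i : ℤ) - 1) with ha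
  set b : Fin m → ℝ := fun i => binCDF n₂ p (y i) with hb
  have hset : {U : Fin m → ℝ | ∀ n ∈ Finset.Icc n₁ n₂, ∀ i,
      binCDF n p ((y i : ℤ) - 1) < U i ∧ U i ≤ binCDF n p (y i)}
      = Set.pi Set.univ (fun i => Set.Ioc (a i) (b i)) := by
    ext U
    simp only [Set.mem_setOf_eq, Set.mem_pi, Set.mem_univ, forall_true_left, Set.mem_Ioc]
    constructor
    · intro h i
      exact ⟨(h n₁ (Finset.mem_Icc.2 ⟨le_refl _, hn⟩) i).1,
        (h n₂ (Finset.mem_Icc.2 ⟨hn, le_refl _⟩) i).2⟩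
    · intro h n hn' i
      rw [Finset.mem_Icc] at hn'
      exact ⟨lt_of_le_of_lt (binCDF_anti hp0 hp1 _ hn'.1) (h i).1,
        le_trans (h i).2 (binCDF_anti hp0 hp1 _ hn'.2)⟩
  rw [hset, Measure.pi_pi,
    ENNReal.ofReal_prod_of_nonneg (fun i _ => le_max_left 0 _)]
  apply Finset.prod_congr rfl
  intro i _
  have hIoc : Set.Ioc (a i) (b i) ⊆ Set.Icc (0 : ℝ) 1 := by
    intro x hx
    exact ⟨le_of_lt (lt_of_le_of_lt (binCDF_nonneg hp0 hp1 _ _) hx.1),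
      le_trans hx.2 (binCDF_le_one hp0 hp1 _ _)⟩
  rw [Measure.restrict_apply measurableSet_Ioc, Set.inter_eq_left.2 hIoc, Real.volume_Ioc]
  rcases le_total (b i) (a i) with h | h
  · rw [max_eq_left (by linarith), ENNReal.ofReal_of_nonpos (by linarith)]
    simp
  · rw [max_eq_right (by linarith)]
end
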